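/- Let R be a Bezout domain of stable range 1 and suppose aR + bR = dR with a = da₁, b = db₁ and a₁u + b₁v = 1 − c where dc = 0. Then there exist λ, μ ∈ R such that (a₁ + cλ)R + (b₁ + cμ)R = R. -/
import Mathlib


def IsBezout2 (R : Type*) [Ring R] : Prop :=
  (∀ I : Submodule Rᵐᵒᵖ R, I.FG → ∃ d : R, I = Submodule.span Rᵐᵒᵖ {d}) ∧
  (∀ I : Ideal R, I.FG → ∃ d : R, I = Ideal.span {d})

/-- Stable range 1: `aR + bR = R` implies `(a + bt)R = R` for some `t`. -/
def StableRange1 (R : Type*) [Ring R] : Prop :=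
  ∀ a b : R, (∃ u v : R, a * u + b * v = 1) →
    ∃ t : R, ∃ s : R, (a + b * t) * s = 1

theorem exists_unimodular_shift {R : Type*} [Ring R] [IsDomain R]
    (hB : IsBezout2 R) (h1 : StableRange1 R)
    (a b d a₁ b₁ u v c : R)
    (hd : Submodule.span Rᵐᵒᵖ ({a, b} : Set R) = Submodule.span Rᵐᵒᵖ {d})
    (ha : a = d * a₁) (hb : b = d * b₁)
    (huv : a₁ * u + b₁ * v = 1 - c) (hdc : d * c = 0) :
    ∃ lam mu x y : R, (a₁ + c * lam) * x + (b₁ + c * mu) * y = 1 := by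
  obtain ⟨hR, -⟩ := hB
  obtain ⟨h, hh⟩ := hR (Submodule.span Rᵐᵒᵖ ({b₁, c} : Set R))
    (Submodule.fg_span ((Set.finite_singleton c).insert b₁))
  have hb₁ : b₁ ∈ Submodule.span Rᵐᵒᵖ ({h} : Set R) := by
    rw [← hh]; exact Submodule.subset_span (by simp)
  have hc : c ∈ Submodule.span Rᵐᵒᵖ ({h} : Set R) := by
    rw [← hh]; exact Submodule.subset_span (by simp)
  have hhm : h ∈ Submodule.span Rᵐᵒᵖ ({b₁, c} : Set R) := by
    rw [hh]; exact Submodule.mem_span_singleton_self h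
  rw [Submodule.mem_span_singleton] at hb₁ hc
  obtain ⟨p, hp⟩ := hb₁
  obtain ⟨q, hq⟩ := hc
  rw [Submodule.mem_span_pair] at hhm
  obtain ⟨α, β, hαβ⟩ := hhm
  have hp' : h * p.unop = b₁ := by simpa [MulOpposite.smul_eq_mul_unop] using hp
  have hq' : h * q.unop = c := by simpa [MulOpposite.smul_eq_mul_unop] using hq
  have hαβ' : b₁ * α.unop + c * β.unop = h := by
    simpa [MulOpposite.smul_eq_mul_unop] using hαβ
  have key : a₁ * u + h * (p.unop * v + q.unop) = 1 := by
    have : a₁ * u + b₁ * v + c = 1 := by rw [huv]; exact sub_add_cancel 1 c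
    rw [← this, ← hp', ← hq']; noncomm_ring
  obtain ⟨t, s, hts⟩ := h1 a₁ h ⟨u, p.unop * v + q.unop, key⟩
  refine ⟨β.unop * t, 0, s, α.unop * t * s, ?_⟩
  calc (a₁ + c * (β.unop * t)) * s + (b₁ + c * 0) * (α.unop * t * s)
      = (a₁ + (b₁ * α.unop + c * β.unop) * t) * s := by noncomm_ring
    _ = (a₁ + h * t) * s := by rw [hαβ']
    _ = 1 := hts
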